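/- (Proposition 2, symmetric case) Let d₁ = d₂ = d and let U be a unitary matrix indexed by Fin d × Fin d. Let S be the SWAP matrix on Fin d × Fin d, with entries S (a,b) (a',b') = 1 if a = b' and b = a' and 0 otherwise. With E(A) := 1 − (1/d⁴) · Tr((A ⊗ A) · T₁₃ · (A ⊗ A)ᴴ · T₁₃) for a matrix A indexed by Fin d × Fin d, one has E(S) = 1 − 1/d², and the entangling power satisfies e(U) = (d²/(d+1)²) · (E(U) + E(U·S) − E(S)). -/

import Mathlib

noncomputable section

open Matrix
open scoped Kronecker

/-- The swap `T₁₃` of subsystems 1 and 3 on the two-copy space. -/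
def T13 (d₁ d₂ : ℕ) :
    Matrix ((Fin d₁ × Fin d₂) × (Fin d₁ × Fin d₂)) ((Fin d₁ × Fin d₂) × (Fin d₁ × Fin d₂)) ℂ :=
  Matrix.of fun x y =>
    if x.1.1 = y.2.1 ∧ x.2.1 = y.1.1 ∧ x.1.2 = y.1.2 ∧ x.2.2 = y.2.2 then 1 else 0

/-- The swap `T₂₄` of subsystems 2 and 4 on the two-copy space. -/
def T24 (d₁ d₂ : ℕ) :
    Matrix ((Fin d₁ × Fin d₂) × (Fin d₁ × Fin d₂)) ((Fin d₁ × Fin d₂) × (Fin d₁ × Fin d₂)) ℂ :=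
  Matrix.of fun x y =>
    if x.1.2 = y.2.2 ∧ x.2.2 = y.1.2 ∧ x.1.1 = y.1.1 ∧ x.2.1 = y.2.1 then 1 else 0

/-- `P₁₃⁺ = (1 + T₁₃)/2`. -/
def P13p (d₁ d₂ : ℕ) := (2 : ℂ)⁻¹ • (1 + T13 d₁ d₂)

/-- `P₁₃⁻ = (1 − T₁₃)/2`. -/
def P13m (d₁ d₂ : ℕ) := (2 : ℂ)⁻¹ • (1 - T13 d₁ d₂)

/-- `P₂₄⁺ = (1 + T₂₄)/2`. -/
def P24p (d₁ d₂ : ℕ) := (2 : ℂ)⁻¹ • (1 + T24 d₁ d₂)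

/-- The entangling power
`e(U) = (8/(d₁(d₁+1)d₂(d₂+1))) · Tr((U⊗U) P₁₃⁺ P₂₄⁺ (U⊗U)ᴴ P₁₃⁻)`. -/
def ePow (d₁ d₂ : ℕ) (U : Matrix (Fin d₁ × Fin d₂) (Fin d₁ × Fin d₂) ℂ) : ℂ :=
  (8 / ((d₁ : ℂ) * ((d₁ : ℂ) + 1) * (d₂ : ℂ) * ((d₂ : ℂ) + 1))) *
    ((U ⊗ₖ U) * P13p d₁ d₂ * P24p d₁ d₂ * (U ⊗ₖ U)ᴴ * P13m d₁ d₂).trace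

/-- The SWAP matrix on `Fin d × Fin d`. -/
def Sw (d : ℕ) : Matrix (Fin d × Fin d) (Fin d × Fin d) ℂ :=
  Matrix.of fun x y => if x.1 = y.2 ∧ x.2 = y.1 then 1 else 0

/-!
Expanding the three projectors, `8 · Tr((U⊗U) P₁₃⁺ P₂₄⁺ (U⊗U)ᴴ P₁₃⁻)` becomes a sum of eight traces.
Since `T₁₃² = 1` and `T₁₃ T₂₄` is the swap of the two copies, which commutes with `U ⊗ U`, all but two
of them are traces of permutation matrices, and one is left with
`d⁴ + d² − Tr((U⊗U) T₁₃ (U⊗U)ᴴ T₁₃) − Tr((U⊗U) T₂₄ (U⊗U)ᴴ T₁₃)`.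
Conjugating `T₁₃` by `S ⊗ S` gives `T₂₄`, so the last trace is the one defining `E(U·S)`;
the one defining `E(S)` is `Tr(T₂₄ T₁₃) = d²`, the trace of the swap of the copies.
-/

open Equiv

section Permutations

variable (α β : Type*)

def swap13 : Perm ((α × β) × (α × β)) :=
  Function.Involutive.toPerm (fun x => ((x.2.1, x.1.2), (x.1.1, x.2.2))) fun _ => rfl

def swap24 : Perm ((α × β) × (α × β)) :=
  Function.Involutive.toPerm (fun x => ((x.1.1, x.2.2), (x.2.1, x.1.2))) fun _ => rfl

theorem swap13_mul_self : swap13 α β * swap13 α β = 1 := rfl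

theorem swap13_mul_swap24 : swap13 α β * swap24 α β = prodComm (α × β) (α × β) := rfl

theorem swap24_mul_swap13 : swap24 α β * swap13 α β = prodComm (α × β) (α × β) := rfl

theorem prodCongr_prodComm_conj_swap13 :
    (prodComm α α).prodCongr (prodComm α α) * swap13 α α * (prodComm α α).prodCongr (prodComm α α)
      = swap24 α α := rfl

end Permutations

section PermMatrix

variable {m n R : Type*} [DecidableEq m] [DecidableEq n]

theorem kronecker_permMatrix [MulZeroOneClass R] (σ : Perm m) (τ : Perm n) :
    σ.permMatrix R ⊗ₖ τ.permMatrix R = Perm.permMatrix R (σ.prodCongr τ) := by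
  ext ⟨i, j⟩ ⟨k, l⟩
  simp [PEquiv.toMatrix_apply, ← ite_and, and_comm]

variable [Fintype n]

theorem permMatrix_prodComm_mul_kronecker [CommSemiring R] (A B : Matrix n n R) :
    Perm.permMatrix R (prodComm n n) * (A ⊗ₖ B) = (B ⊗ₖ A) * Perm.permMatrix R (prodComm n n) := by
  ext ⟨i, j⟩ ⟨k, l⟩
  simp [PEquiv.toMatrix_toPEquiv_mul, PEquiv.mul_toMatrix_toPEquiv, mul_comm]

theorem trace_permMatrix_prodComm [AddCommMonoidWithOne R] :
    (Perm.permMatrix R (prodComm n n)).trace = Fintype.card n := by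
  rw [Matrix.trace, Fintype.sum_prod_type]
  simp [PEquiv.toMatrix_apply, Prod.ext_iff, eq_comm]

end PermMatrix

theorem T13_eq_permMatrix (d₁ d₂ : ℕ) : T13 d₁ d₂ = Perm.permMatrix ℂ (swap13 (Fin d₁) (Fin d₂)) := by
  ext x y
  simp only [T13, swap13, of_apply, PEquiv.toMatrix_apply, toPEquiv_apply, Option.mem_def,
    Option.some.injEq, Prod.ext_iff, eq_comm]
  exact if_congr (by tauto) rfl rfl

theorem T24_eq_permMatrix (d₁ d₂ : ℕ) : T24 d₁ d₂ = Perm.permMatrix ℂ (swap24 (Fin d₁) (Fin d₂)) := by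
  ext x y
  simp only [T24, swap24, of_apply, PEquiv.toMatrix_apply, toPEquiv_apply, Option.mem_def,
    Option.some.injEq, Prod.ext_iff, eq_comm]
  exact if_congr (by tauto) rfl rfl

theorem Sw_eq_permMatrix (d : ℕ) : Sw d = Perm.permMatrix ℂ (prodComm (Fin d) (Fin d)) := by
  ext x y
  simp [Sw, PEquiv.toMatrix_apply, Prod.ext_iff, eq_comm, and_comm]

theorem T13_mul_T13 (d₁ d₂ : ℕ) : T13 d₁ d₂ * T13 d₁ d₂ = 1 := by
  rw [T13_eq_permMatrix, ← Matrix.permMatrix_mul, swap13_mul_self, Matrix.permMatrix_one]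

theorem T13_mul_T24 (d₁ d₂ : ℕ) :
    T13 d₁ d₂ * T24 d₁ d₂ = Perm.permMatrix ℂ (prodComm (Fin d₁ × Fin d₂) (Fin d₁ × Fin d₂)) := by
  rw [T13_eq_permMatrix, T24_eq_permMatrix, ← Matrix.permMatrix_mul, swap24_mul_swap13]

theorem T24_mul_T13 (d₁ d₂ : ℕ) :
    T24 d₁ d₂ * T13 d₁ d₂ = Perm.permMatrix ℂ (prodComm (Fin d₁ × Fin d₂) (Fin d₁ × Fin d₂)) := by
  rw [T13_eq_permMatrix, T24_eq_permMatrix, ← Matrix.permMatrix_mul, swap13_mul_swap24]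

theorem conjTranspose_Sw (d : ℕ) : (Sw d)ᴴ = Sw d := by
  rw [Sw_eq_permMatrix, Matrix.conjTranspose_permMatrix]
  rfl

theorem Sw_kronecker_Sw_mul_T13_mul_Sw_kronecker_Sw (d : ℕ) :
    (Sw d ⊗ₖ Sw d) * T13 d d * (Sw d ⊗ₖ Sw d) = T24 d d := by
  rw [Sw_eq_permMatrix, kronecker_permMatrix, T13_eq_permMatrix, T24_eq_permMatrix,
    ← Matrix.permMatrix_mul, ← Matrix.permMatrix_mul, ← mul_assoc, prodCongr_prodComm_conj_swap13]

theorem trace_mul_one_add_mul_one_add_mul_mul_one_sub {n R : Type*} [Fintype n] [DecidableEq n]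
    [CommRing R] {W V A B : Matrix n n R} (hVW : V * W = 1) (hA : A * A = 1)
    (hWAB : Commute W (A * B)) :
    (W * (1 + A) * (1 + B) * V * (1 - A)).trace
      = (1 : Matrix n n R).trace + (A * B).trace - (W * A * V * A).trace - (W * B * V * A).trace := by
  have hWV : W * V = 1 := mul_eq_one_comm.mp hVW
  have hconj : ∀ X, (W * X * V).trace = X.trace := fun X => by
    rw [Matrix.trace_mul_cycle, hVW, one_mul]
  have hABA : (W * (A * B) * V * A).trace = B.trace := by
    rw [hWAB.eq, mul_assoc (A * B), hWV, mul_one, Matrix.trace_mul_comm, ← mul_assoc, hA, one_mul]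
  have hexpand : W * (1 + A) * (1 + B) * V * (1 - A)
      = W * V + W * A * V + W * B * V + W * (A * B) * V
        - W * V * A - W * A * V * A - W * B * V * A - W * (A * B) * V * A := by
    noncomm_ring
  simp only [hexpand, Matrix.trace_add, Matrix.trace_sub, hconj, hABA, hWV, one_mul]
  ring

theorem ePow_eq_of_conjTranspose_mul_self_eq_one {d₁ d₂ : ℕ}
    {U : Matrix (Fin d₁ × Fin d₂) (Fin d₁ × Fin d₂) ℂ} (hU : Uᴴ * U = 1) :
    ePow d₁ d₂ U = ((d₁ * d₂ : ℂ) ^ 2 + d₁ * d₂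
        - ((U ⊗ₖ U) * T13 d₁ d₂ * (U ⊗ₖ U)ᴴ * T13 d₁ d₂).trace
        - ((U ⊗ₖ U) * T24 d₁ d₂ * (U ⊗ₖ U)ᴴ * T13 d₁ d₂).trace)
      / (d₁ * (d₁ + 1) * d₂ * (d₂ + 1)) := by
  have hunitary : (U ⊗ₖ U)ᴴ * (U ⊗ₖ U) = 1 := by
    rw [Matrix.conjTranspose_kronecker, ← Matrix.mul_kronecker_mul, hU, Matrix.one_kronecker_one]
  have hcomm : Commute (U ⊗ₖ U) (T13 d₁ d₂ * T24 d₁ d₂) := by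
    rw [T13_mul_T24]
    exact (permMatrix_prodComm_mul_kronecker U U).symm
  have hprojectors : (U ⊗ₖ U) * P13p d₁ d₂ * P24p d₁ d₂ * (U ⊗ₖ U)ᴴ * P13m d₁ d₂
      = (8 : ℂ)⁻¹ • ((U ⊗ₖ U) * (1 + T13 d₁ d₂) * (1 + T24 d₁ d₂) * (U ⊗ₖ U)ᴴ * (1 - T13 d₁ d₂)) := by
    simp only [P13p, P24p, P13m, Matrix.mul_smul, Matrix.smul_mul, smul_smul]
    norm_num
  rw [ePow, hprojectors, Matrix.trace_smul,
    trace_mul_one_add_mul_one_add_mul_mul_one_sub hunitary (T13_mul_T13 d₁ d₂) hcomm,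
    T13_mul_T24, trace_permMatrix_prodComm, Matrix.trace_one]
  simp only [Fintype.card_prod, Fintype.card_fin, smul_eq_mul]
  push_cast
  ring

theorem trace_Sw_kronecker_conj_T13_mul_T13 (d : ℕ) :
    ((Sw d ⊗ₖ Sw d) * T13 d d * (Sw d ⊗ₖ Sw d)ᴴ * T13 d d).trace = (d : ℂ) ^ 2 := by
  rw [Matrix.conjTranspose_kronecker, conjTranspose_Sw, Sw_kronecker_Sw_mul_T13_mul_Sw_kronecker_Sw,
    T24_mul_T13, trace_permMatrix_prodComm]
  simp [sq]

theorem trace_kronecker_conj_T24_mul_T13 (d : ℕ) (U : Matrix (Fin d × Fin d) (Fin d × Fin d) ℂ) :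
    ((U ⊗ₖ U) * T24 d d * (U ⊗ₖ U)ᴴ * T13 d d).trace
      = (((U * Sw d) ⊗ₖ (U * Sw d)) * T13 d d * ((U * Sw d) ⊗ₖ (U * Sw d))ᴴ * T13 d d).trace := by
  rw [← Sw_kronecker_Sw_mul_T13_mul_Sw_kronecker_Sw, Matrix.mul_kronecker_mul,
    Matrix.conjTranspose_mul]
  simp only [Matrix.conjTranspose_kronecker, conjTranspose_Sw, mul_assoc]

theorem ePow_symmetric_case_general (d : ℕ)
    (U : Matrix (Fin d × Fin d) (Fin d × Fin d) ℂ) (hU : Uᴴ * U = 1)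
    (E : Matrix (Fin d × Fin d) (Fin d × Fin d) ℂ → ℂ)
    (hE : ∀ A : Matrix (Fin d × Fin d) (Fin d × Fin d) ℂ,
      E A = 1 - (1 / (d : ℂ) ^ 4) *
        ((A ⊗ₖ A) * T13 d d * (A ⊗ₖ A)ᴴ * T13 d d).trace) :
    E (Sw d) = 1 - 1 / (d : ℂ) ^ 2 ∧
    ePow d d U = ((d : ℂ) ^ 2 / ((d : ℂ) + 1) ^ 2) * (E U + E (U * Sw d) - E (Sw d)) := by
  have hESw : E (Sw d) = 1 - 1 / (d : ℂ) ^ 2 := by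
    rw [hE, trace_Sw_kronecker_conj_T13_mul_T13]
    rcases eq_or_ne (d : ℂ) 0 with hd | hd
    · simp [hd]
    · field_simp
  refine ⟨hESw, ?_⟩
  rw [ePow_eq_of_conjTranspose_mul_self_eq_one hU, trace_kronecker_conj_T24_mul_T13, hE U,
    hE (U * Sw d), hESw]
  rcases eq_or_ne (d : ℂ) 0 with hd | hd
  · simp [hd]
  · field_simp
    ring

/-- (Proposition 2, symmetric case) With `E(A) = 1 − (1/d⁴)·Tr((A⊗A) T₁₃ (A⊗A)ᴴ T₁₃)`,
one has `E(S) = 1 − 1/d²` and `e(U) = (d²/(d+1)²)·(E(U) + E(U·S) − E(S))`. -/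
theorem ePow_symmetric_case (d : ℕ) (hd : 0 < d)
    (U : Matrix (Fin d × Fin d) (Fin d × Fin d) ℂ) (hU : Uᴴ * U = 1)
    (E : Matrix (Fin d × Fin d) (Fin d × Fin d) ℂ → ℂ)
    (hE : ∀ A : Matrix (Fin d × Fin d) (Fin d × Fin d) ℂ,
      E A = 1 - (1 / (d : ℂ) ^ 4) *
        ((A ⊗ₖ A) * T13 d d * (A ⊗ₖ A)ᴴ * T13 d d).trace) :
    E (Sw d) = 1 - 1 / (d : ℂ) ^ 2 ∧
    ePow d d U = ((d : ℂ) ^ 2 / ((d : ℂ) + 1) ^ 2) * (E U + E (U * Sw d) - E (Sw d)) :=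
  ePow_symmetric_case_general d U hU E hE
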